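/- For every positive integer N and m ∈ {1,2}, the generating functions G_{m,N}(a,b,q) satisfy q^{3N}(1+bq) G_{m,3(N-1)} = G_{m,3N+1} - G_{m,3(N-1)+1} - a q^{3N-1}(1 + b q^{3N+1}) G_{m,3(N-2)+1}. -/

import Mathlib

/-!
Each recurrence comes from sorting the partitions by whether they contain the largest admissible
part `K`. Those that do not are counted by the same series with `K` removed; in those that do, `K`
is the first part and the rest is a partition into parts satisfying the gap condition with `K`.
For `K = 3N` the remaining parts are `≤ 3N - 3`; for `K = 3N - 1` they are `≤ 3N - 5`; for
`K = 3N + 1` they are `≤ 3N - 3` or the single part `3N - 1` (whose sum with `3N + 1` is `6N`),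
which is peeled off in turn. The combined relation is the sum of the recurrences for
`G_{m,3N+1}`, `G_{m,3N}` and `G_{m,3N-1}`.
-/

namespace CapparelliG

/-- `G m Nb` is the Alladi–Andrews–Gordon three-variable generating function
`G_{m,Nb}(a,b,q)` (with `a = X 0`, `b = X 1`, `q = X 2`), allowing an integer bound
`Nb` on the largest part.  For `Nb ≥ 0` the coefficient of `aⁱ bʲ qⁿ` is the number of
partitions of `n` with no part equal to `m`, largest part `≤ Nb`, consecutive-part
differences `≥ 4` unless the parts are consecutive multiples of 3 or sum to a multiple
of 6 (difference at least 2), with `i` parts `≡ 2 (mod 3)` and `j` parts `≡ 1 (mod 3)`.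
For negative indices we use the stipulated initial values
`G_{m,-1} = 1`, `G_{m,-2} = δ_{1,m}` (and `0` below `-2`). -/
noncomputable def G (m : ℕ) (Nb : ℤ) : MvPowerSeries (Fin 3) ℤ :=
  if 0 ≤ Nb then
    (fun d =>
      (Nat.card {l : List ℕ // (∀ x ∈ l, 0 < x ∧ x ≠ m ∧ (x : ℤ) ≤ Nb) ∧
          l.Chain' (fun x y => y + 2 ≤ x ∧
            (y + 4 ≤ x ∨ (3 ∣ y ∧ x = y + 3) ∨ 6 ∣ (x + y))) ∧
          (l.filter (fun x => x % 3 = 2)).length = d 0 ∧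
          (l.filter (fun x => x % 3 = 1)).length = d 1 ∧
          l.sum = d 2} : ℤ))
  else if Nb = -1 then 1
  else if Nb = -2 ∧ m = 1 then 1
  else 0

open MvPowerSeries

def Gap (x y : ℕ) : Prop :=
  y + 2 ≤ x ∧ (y + 4 ≤ x ∨ (3 ∣ y ∧ x = y + 3) ∨ 6 ∣ (x + y))

instance : IsTrans ℕ Gap := ⟨fun _ _ _ h₁ h₂ => by unfold Gap at *; omega⟩

def IsAdmissible (m : ℕ) (A : ℕ → Prop) (l : List ℕ) : Prop :=
  (∀ x ∈ l, 0 < x ∧ x ≠ m ∧ A x) ∧ l.IsChain Gap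

noncomputable def partWeight (k : ℕ) : Fin 3 →₀ ℕ :=
  Finsupp.single 0 (if k % 3 = 2 then 1 else 0) + Finsupp.single 1 (if k % 3 = 1 then 1 else 0) +
    Finsupp.single 2 k

noncomputable def listWeight (l : List ℕ) : Fin 3 →₀ ℕ := (l.map partWeight).sum

/-- `G m Nb` with the bound `· ≤ Nb` on the parts replaced by an arbitrary predicate `A`. -/
noncomputable def genSeries (m : ℕ) (A : ℕ → Prop) : MvPowerSeries (Fin 3) ℤ :=
  fun d => {l | IsAdmissible m A l ∧ listWeight l = d}.ncard

@[simp]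
lemma listWeight_cons (k : ℕ) (l : List ℕ) :
    listWeight (k :: l) = partWeight k + listWeight l := by
  simp [listWeight]

lemma listWeight_eq_iff {l : List ℕ} {d : Fin 3 →₀ ℕ} :
    listWeight l = d ↔ (l.filter (fun x => x % 3 = 2)).length = d 0 ∧
      (l.filter (fun x => x % 3 = 1)).length = d 1 ∧ l.sum = d 2 := by
  have happly : listWeight l 0 = (l.filter (fun x => x % 3 = 2)).length ∧
      listWeight l 1 = (l.filter (fun x => x % 3 = 1)).length ∧ listWeight l 2 = l.sum := by
    induction l with
    | nil => simp [listWeight]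
    | cons k l ih =>
      simp only [listWeight_cons, Finsupp.add_apply, partWeight, List.filter_cons, List.sum_cons]
      split_ifs <;> simp_all <;> omega
  obtain ⟨h0, h1, h2⟩ := happly
  rw [Finsupp.ext_iff, Fin.forall_fin_succ, Fin.forall_fin_succ, Fin.forall_fin_succ]
  simp [h0, h1, h2]

lemma monomial_partWeight (k : ℕ) :
    (monomial (partWeight k) 1 : MvPowerSeries (Fin 3) ℤ) =
      X 0 ^ (if k % 3 = 2 then 1 else 0) * X 1 ^ (if k % 3 = 1 then 1 else 0) * X 2 ^ k := by
  simp only [X_pow_eq, monomial_mul_monomial, one_mul, partWeight]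

lemma coeff_genSeries (m : ℕ) (A : ℕ → Prop) (d : Fin 3 →₀ ℕ) :
    coeff d (genSeries m A) = {l | IsAdmissible m A l ∧ listWeight l = d}.ncard := rfl

lemma finite_setOf_isAdmissible (m : ℕ) (A : ℕ → Prop) (d : Fin 3 →₀ ℕ) :
    {l | IsAdmissible m A l ∧ listWeight l = d}.Finite := by
  refine Set.finite_coe_iff.mp (Finite.of_injective
    (fun l => (⟨l.1, fun hx => (l.2.1.1 _ hx).1, ?_⟩ : Composition (d 2))) ?_)
  · exact (listWeight_eq_iff.mp l.2.2).2.2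
  · intro l l' h
    exact Subtype.ext (congrArg Composition.blocks h)

lemma genSeries_congr {m : ℕ} {A B : ℕ → Prop} (h : ∀ x, 0 < x → x ≠ m → (A x ↔ B x)) :
    genSeries m A = genSeries m B := by
  have hadm (l : List ℕ) : IsAdmissible m A l ↔ IsAdmissible m B l :=
    and_congr_left' <| forall₂_congr fun x _ =>
      and_congr_right fun hx => and_congr_right fun hxm => h x hx hxm
  ext d
  simp only [coeff_genSeries, hadm]

lemma isAdmissible_iff_eq_nil {m : ℕ} {A : ℕ → Prop} (h : ∀ x, 0 < x → x ≠ m → ¬ A x)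
    {l : List ℕ} : IsAdmissible m A l ↔ l = [] := by
  refine ⟨fun ⟨hparts, _⟩ => ?_, fun hl => hl ▸ ⟨by simp, List.isChain_nil⟩⟩
  rw [List.eq_nil_iff_forall_not_mem]
  exact fun x hx => h x (hparts x hx).1 (hparts x hx).2.1 (hparts x hx).2.2

lemma genSeries_eq_one {m : ℕ} {A : ℕ → Prop} (h : ∀ x, 0 < x → x ≠ m → ¬ A x) :
    genSeries m A = 1 := by
  ext d
  classical
  simp only [coeff_genSeries, isAdmissible_iff_eq_nil h, coeff_one]
  split_ifs with hd
  · subst hd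
    rw [show {l : List ℕ | l = [] ∧ listWeight l = 0} = {[]} from
      Set.ext fun l => ⟨fun hl => hl.1, fun hl => ⟨hl, hl ▸ rfl⟩⟩]
    simp
  · rw [show {l : List ℕ | l = [] ∧ listWeight l = d} = ∅ from
      Set.eq_empty_of_forall_notMem fun l hl => hd (hl.2.symm.trans (hl.1 ▸ rfl))]
    simp

lemma eq_cons_of_mem_of_forall_le {K : ℕ} {l : List ℕ} (hchain : l.IsChain Gap)
    (hle : ∀ x ∈ l, x ≤ K) (hmem : K ∈ l) : l = K :: l.tail := by
  obtain _ | ⟨a, t⟩ := l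
  · simp at hmem
  · obtain rfl | hK := List.mem_cons.1 hmem
    · rfl
    · have := List.rel_of_pairwise_cons (List.isChain_iff_pairwise.mp hchain) hK
      have := hle a List.mem_cons_self
      unfold Gap at *
      omega

section Largest

variable {m K : ℕ} {A : ℕ → Prop}

lemma isAdmissible_iff_of_largest (hK : 0 < K) (hKm : K ≠ m) (hAK : A K)
    (hle : ∀ x, A x → x ≤ K) {l : List ℕ} :
    IsAdmissible m A l ↔ IsAdmissible m (fun x => A x ∧ x ≠ K) l ∨
      ∃ t, IsAdmissible m (fun x => A x ∧ Gap K x) t ∧ K :: t = l := by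
  constructor
  · rintro ⟨hparts, hchain⟩
    by_cases hmem : K ∈ l
    · obtain ⟨t, rfl⟩ : ∃ t, l = K :: t :=
        ⟨_, eq_cons_of_mem_of_forall_le hchain (fun x hx => hle x (hparts x hx).2.2) hmem⟩
      have hgap := List.pairwise_cons.mp (List.isChain_iff_pairwise.mp hchain)
      refine .inr ⟨t, ⟨fun x hx => ?_, hchain.tail⟩, rfl⟩
      obtain ⟨hx0, hxm, hAx⟩ := hparts x (List.mem_cons_of_mem _ hx)
      exact ⟨hx0, hxm, hAx, hgap.1 x hx⟩
    · refine .inl ⟨fun x hx => ?_, hchain⟩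
      obtain ⟨hx0, hxm, hAx⟩ := hparts x hx
      exact ⟨hx0, hxm, hAx, fun hxK => hmem (hxK ▸ hx)⟩
  · rintro (⟨hparts, hchain⟩ | ⟨t, ⟨hparts, hchain⟩, rfl⟩)
    · exact ⟨fun x hx => ⟨(hparts x hx).1, (hparts x hx).2.1, (hparts x hx).2.2.1⟩, hchain⟩
    · refine ⟨fun x hx => ?_,
        List.isChain_cons.2 ⟨fun y hy => (hparts y (List.mem_of_mem_head? hy)).2.2.2, hchain⟩⟩
      obtain rfl | hx := List.mem_cons.1 hx
      · exact ⟨hK, hKm, hAK⟩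
      · exact ⟨(hparts x hx).1, (hparts x hx).2.1, (hparts x hx).2.2.1⟩

lemma coeff_monomial_mul_genSeries (e d : Fin 3 →₀ ℕ) :
    coeff d (monomial e (1 : ℤ) * genSeries m A) =
      {t | IsAdmissible m A t ∧ e + listWeight t = d}.ncard := by
  rw [coeff_monomial_mul, coeff_genSeries]
  split_ifs with hed
  · simp only [one_mul, eq_tsub_iff_add_eq_of_le hed, add_comm]
  · suffices {t | IsAdmissible m A t ∧ e + listWeight t = d} = ∅ by simp [this]
    exact Set.eq_empty_of_forall_notMem fun t ht => hed (ht.2 ▸ le_self_add)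

theorem genSeries_eq_add_of_largest {B C : ℕ → Prop} (hK : 0 < K) (hKm : K ≠ m) (hAK : A K)
    (hle : ∀ x, A x → x ≤ K) (hB : ∀ x, 0 < x → x ≠ m → (B x ↔ A x ∧ x ≠ K))
    (hC : ∀ x, 0 < x → x ≠ m → (C x ↔ A x ∧ Gap K x)) :
    genSeries m A = genSeries m B + monomial (partWeight K) 1 * genSeries m C := by
  rw [genSeries_congr hB, genSeries_congr hC]
  ext d
  have hsplit : {l | IsAdmissible m A l ∧ listWeight l = d} =
      {l | IsAdmissible m (fun x => A x ∧ x ≠ K) l ∧ listWeight l = d} ∪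
        List.cons K '' {t | IsAdmissible m (fun x => A x ∧ Gap K x) t ∧
          partWeight K + listWeight t = d} := by
    ext l
    simp only [Set.mem_union, Set.mem_image, Set.mem_ofPred_eq,
      isAdmissible_iff_of_largest hK hKm hAK hle]
    constructor
    · rintro ⟨hB | ⟨t, ht, rfl⟩, hw⟩
      · exact .inl ⟨hB, hw⟩
      · exact .inr ⟨t, ⟨ht, by simpa using hw⟩, rfl⟩
    · rintro (⟨hB, hw⟩ | ⟨t, ⟨ht, hw⟩, rfl⟩)
      · exact ⟨.inl hB, hw⟩
      · exact ⟨.inr ⟨t, ht, rfl⟩, by simpa using hw⟩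
  have hdisj : Disjoint {l | IsAdmissible m (fun x => A x ∧ x ≠ K) l ∧ listWeight l = d}
      (List.cons K '' {t | IsAdmissible m (fun x => A x ∧ Gap K x) t ∧
          partWeight K + listWeight t = d}) := by
    rw [Set.disjoint_left]
    rintro _ ⟨⟨hparts, -⟩, -⟩ ⟨t, -, rfl⟩
    exact (hparts K List.mem_cons_self).2.2.2 rfl
  have hfin := finite_setOf_isAdmissible m A d
  rw [hsplit] at hfin
  rw [map_add, coeff_monomial_mul_genSeries, coeff_genSeries, coeff_genSeries, hsplit,
    Set.ncard_union_eq hdisj (hfin.subset Set.subset_union_left)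
      (hfin.subset Set.subset_union_right),
    Set.ncard_image_of_injective _ List.cons_injective]
  push_cast
  rfl

end Largest

lemma G_eq_genSeries (m : ℕ) {Nb : ℤ} (h : 0 ≤ Nb) :
    G m Nb = genSeries m (fun x => (x : ℤ) ≤ Nb) := by
  unfold G
  refine (if_pos h).trans (funext fun d => ?_)
  refine congrArg Nat.cast (Nat.card_congr (Equiv.subtypeEquivRight fun l => ?_))
  simp only [Set.mem_ofPred_eq, IsAdmissible, listWeight_eq_iff, and_assoc]
  rfl

lemma G_neg_two (m : ℕ) : G m (-2) = if m = 1 then 1 else 0 := by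
  simp [G]

lemma pow_six_mul_eq {M : Type*} [Monoid M] (x : M) {N : ℕ} (hN : 1 ≤ N) :
    x ^ (6 * N) = x ^ (3 * N - 1) * x ^ (3 * N + 1) := by
  rw [← pow_add]
  congr 1
  omega

section Recurrences

variable {m N : ℕ}

theorem G_three_mul (hmN : m ≠ 3 * N) (hN : 1 ≤ N) :
    G m (3 * N) = G m (3 * ((N : ℤ) - 1) + 2) + X 2 ^ (3 * N) * G m (3 * ((N : ℤ) - 1)) := by
  have hmono : (monomial (partWeight (3 * N)) 1 : MvPowerSeries (Fin 3) ℤ) = X 2 ^ (3 * N) := by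
    simp [monomial_partWeight, Nat.mul_mod_right]
  rw [G_eq_genSeries m (by positivity), G_eq_genSeries m (by omega), G_eq_genSeries m (by omega),
    ← hmono]
  exact genSeries_eq_add_of_largest (by omega) (Ne.symm hmN) le_rfl (fun x hx => by omega)
    (fun x _ _ => by omega) (fun x _ _ => by unfold Gap; omega)

lemma G_three_mul_sub_two_add_one (hm : m = 1 ∨ m = 2) (hN : 1 ≤ N) (hmN : m ≠ 3 * N - 1) :
    G m (3 * ((N : ℤ) - 2) + 1) = genSeries m (fun x => (x : ℤ) ≤ 3 * ((N : ℤ) - 2) + 1) := by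
  rcases lt_or_ge N 2 with hN2 | hN2
  · obtain rfl : N = 1 := by omega
    obtain rfl : m = 1 := by omega
    rw [show 3 * (((1 : ℕ) : ℤ) - 2) + 1 = -2 by norm_num, G_neg_two, if_pos rfl,
      genSeries_eq_one (fun x hx hxm => by omega)]
  · exact G_eq_genSeries m (by omega)

/-- Below a part `3N - 1` only parts `≤ 3N - 5` fit the gap condition. When `3N - 1 = m`, i.e.
`m = 2` and `N = 1`, there is no such part, and the initial value `G_{2,-2} = 0` accounts for it. -/
lemma genSeries_le_or_eq_three_mul_sub_one (hm : m = 1 ∨ m = 2) (hN : 1 ≤ N) {A : ℕ → Prop}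
    {c : ℤ} (hc₀ : 3 * ((N : ℤ) - 1) ≤ c) (hc₁ : c ≤ 3 * ((N : ℤ) - 1) + 1)
    (hA : ∀ x, A x ↔ (x : ℤ) ≤ c ∨ x = 3 * N - 1) :
    genSeries m A = G m c + X 0 * X 2 ^ (3 * N - 1) * G m (3 * ((N : ℤ) - 2) + 1) := by
  rw [G_eq_genSeries m (by omega)]
  by_cases hmN : m = 3 * N - 1
  · obtain ⟨rfl, rfl⟩ : m = 2 ∧ N = 1 := by omega
    rw [show 3 * (((1 : ℕ) : ℤ) - 2) + 1 = -2 by norm_num, G_neg_two, if_neg (by norm_num),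
      mul_zero, add_zero]
    exact genSeries_congr fun x _ hx2 => by rw [hA]; omega
  · have hmono : (monomial (partWeight (3 * N - 1)) 1 : MvPowerSeries (Fin 3) ℤ) =
        X 0 * X 2 ^ (3 * N - 1) := by
      simp [monomial_partWeight, show (3 * N - 1) % 3 = 2 by omega]
    rw [G_three_mul_sub_two_add_one hm hN hmN, ← hmono]
    exact genSeries_eq_add_of_largest (by omega) (Ne.symm hmN) ((hA _).2 (.inr rfl))
      (fun x hx => by rw [hA] at hx; omega) (fun x _ _ => by rw [hA]; omega)
      (fun x _ _ => by rw [hA]; unfold Gap; omega)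

theorem G_three_mul_sub_one (hm : m = 1 ∨ m = 2) (hN : 1 ≤ N) :
    G m (3 * ((N : ℤ) - 1) + 2) =
      G m (3 * ((N : ℤ) - 1) + 1) + X 0 * X 2 ^ (3 * N - 1) * G m (3 * ((N : ℤ) - 2) + 1) := by
  rw [G_eq_genSeries m (by omega)]
  exact genSeries_le_or_eq_three_mul_sub_one hm hN (by omega) (by omega) (fun x => by omega)

theorem G_three_mul_add_one (hm : m = 1 ∨ m = 2) (hN : 1 ≤ N) :
    G m (3 * N + 1) = G m (3 * N) + X 1 * X 2 ^ (3 * N + 1) * G m (3 * ((N : ℤ) - 1)) +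
      X 0 * X 1 * X 2 ^ (6 * N) * G m (3 * ((N : ℤ) - 2) + 1) := by
  have hmono : (monomial (partWeight (3 * N + 1)) 1 : MvPowerSeries (Fin 3) ℤ) =
      X 1 * X 2 ^ (3 * N + 1) := by
    simp [monomial_partWeight, show (3 * N + 1) % 3 = 1 by omega]
  have hpeel := genSeries_eq_add_of_largest (m := m) (K := 3 * N + 1)
    (A := fun x => (x : ℤ) ≤ 3 * N + 1) (B := fun x => (x : ℤ) ≤ 3 * N)
    (C := fun x => (x : ℤ) ≤ 3 * ((N : ℤ) - 1) ∨ x = 3 * N - 1) (by omega) (by omega) le_rfl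
    (fun x hx => by omega) (fun x _ _ => by omega) (fun x _ _ => by unfold Gap; omega)
  rw [hmono, genSeries_le_or_eq_three_mul_sub_one hm hN (by omega) (by omega) fun x => Iff.rfl]
    at hpeel
  rw [G_eq_genSeries m (by omega), G_eq_genSeries m (by omega), hpeel, pow_six_mul_eq _ hN]
  ring

end Recurrences

/-- Berkovich–Uncu, Section 5, the combined relation: for `m ∈ {1,2}` and every positive
integer `N`,
`q^{3N}(1+bq) G_{m,3(N-1)} = G_{m,3N+1} - G_{m,3(N-1)+1}
  - a q^{3N-1}(1 + b q^{3N+1}) G_{m,3(N-2)+1}`. -/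
theorem G_combined_relation (m : ℕ) (hm : m = 1 ∨ m = 2) (N : ℕ) (hN : 1 ≤ N) :
    (MvPowerSeries.X 2 : MvPowerSeries (Fin 3) ℤ) ^ (3 * N) *
        (1 + MvPowerSeries.X 1 * MvPowerSeries.X 2) * G m (3 * ((N : ℤ) - 1)) =
      G m (3 * N + 1) - G m (3 * ((N : ℤ) - 1) + 1) -
        (MvPowerSeries.X 0 : MvPowerSeries (Fin 3) ℤ) * MvPowerSeries.X 2 ^ (3 * N - 1) *
          (1 + MvPowerSeries.X 1 * MvPowerSeries.X 2 ^ (3 * N + 1)) *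
          G m (3 * ((N : ℤ) - 2) + 1) := by
  have h3N1 := G_three_mul_add_one hm hN
  have h3N := G_three_mul (m := m) (by omega) hN
  have h3Nsub1 := G_three_mul_sub_one hm hN
  rw [pow_six_mul_eq _ hN] at h3N1
  linear_combination -h3N1 - h3N - h3Nsub1

end CapparelliG
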